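/- arXiv:1710.07527 — 3 statements merged into one kernel-verified Lean document; each statement's English description precedes it below -/
import Mathlib

section
/- If G is a graph of order n with distinguishing number D(G) = d, then ρ_d(G) ≤ n − Det(G). -/
/-!
Take a `D(G)`-distinguishing labeling and any one of its label classes `C`. An automorphism
fixing every vertex outside `C` permutes `C`, hence preserves all labels, hence is the identity;
so the complement of `C` is determining and `Det(G) ≤ n - |C|`, while `ρ_d(G) ≤ |C|`.
-/

open SimpleGraph

/-- A labeling `f : V → Fin d` is `d`-distinguishing if the only automorphism
preserving all labels is the identity. -/
def IsDistinguishing {V : Type*} (G : SimpleGraph V) (d : ℕ) (f : V → Fin d) : Prop :=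
  ∀ φ : G ≃g G, (∀ v, f (φ v) = f v) → ∀ v, φ v = v

/-- The distinguishing number `D(G)`. -/
noncomputable def distNum {V : Type*} (G : SimpleGraph V) : ℕ :=
  sInf {d | ∃ f : V → Fin d, IsDistinguishing G d f}

/-- The cost `ρ_d(G)`: the minimum size of a label class in a
`d`-distinguishing labeling of `G`. -/
noncomputable def cost {V : Type*} (G : SimpleGraph V) [Fintype V] (d : ℕ) : ℕ :=
  sInf {k | ∃ (f : V → Fin d) (i : Fin d), IsDistinguishing G d f ∧
    k = (Finset.univ.filter (fun v => f v = i)).card}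

/-- `S` is a determining set for `G` if automorphisms agreeing on `S` agree everywhere. -/
def IsDeterminingSet {V : Type*} (G : SimpleGraph V) (S : Set V) : Prop :=
  ∀ φ ψ : G ≃g G, (∀ v ∈ S, φ v = ψ v) → ∀ v, φ v = ψ v

/-- The determining number `Det(G)`. -/
noncomputable def detNum {V : Type*} (G : SimpleGraph V) [Fintype V] : ℕ :=
  sInf {k | ∃ S : Finset V, IsDeterminingSet G ↑S ∧ S.card = k}

lemma Function.Injective.mapsTo_of_forall_notMem_apply_eq {α : Type*} {g : α → α}
    (hg : Function.Injective g) {S : Set α} (hfix : ∀ w ∉ S, g w = w) : Set.MapsTo g S S := by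
  intro w hw
  by_contra hgw
  rw [hg (hfix (g w) hgw)] at hgw
  exact hgw hw

namespace IsDistinguishing

variable {V : Type*} {G : SimpleGraph V} {d : ℕ} {f : V → Fin d}

lemma isDeterminingSet_compl_labelClass (hf : IsDistinguishing G d f) (i : Fin d) :
    IsDeterminingSet G {v | f v = i}ᶜ := by
  intro φ ψ hagree v
  set χ : G ≃g G := φ.trans ψ.symm
  have hfix : ∀ w ∉ {v | f v = i}, χ w = w := fun w hw => by
    simp [χ, hagree w hw]
  have hmaps := χ.injective.mapsTo_of_forall_notMem_apply_eq hfix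
  have hlabel : ∀ w, f (χ w) = f w := fun w => by
    by_cases hw : f w = i
    · rw [hw]; exact hmaps hw
    · rw [hfix w hw]
  exact ψ.symm_apply_eq.mp (hf χ hlabel v)

end IsDistinguishing

section Finite

variable {V : Type*} [Fintype V] (G : SimpleGraph V)

lemma exists_isDistinguishing_distNum : ∃ f : V → Fin (distNum G), IsDistinguishing G _ f :=
  Nat.sInf_mem (s := {d | ∃ f : V → Fin d, IsDistinguishing G d f}) ⟨Fintype.card V, Fintype.equivFin V,
    fun _ h v => (Fintype.equivFin V).injective (h v)⟩

lemma cost_zero : cost G 0 = 0 := by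
  simp [cost]

variable {G}

lemma cost_le_card_labelClass {d : ℕ} {f : V → Fin d} (hf : IsDistinguishing G d f) (i : Fin d) :
    cost G d ≤ (Finset.univ.filter (fun v => f v = i)).card :=
  Nat.sInf_le ⟨f, i, hf, rfl⟩

lemma detNum_le_card {S : Finset V} (hS : IsDeterminingSet G ↑S) : detNum G ≤ S.card :=
  Nat.sInf_le ⟨S, hS, rfl⟩

end Finite

theorem stmt_4 {V : Type*} [Fintype V] (G : SimpleGraph V) (n d : ℕ)
    (hn : Fintype.card V = n) (hd : distNum G = d) :
    cost G d ≤ n - detNum G := by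
  classical
  subst hn hd
  rcases Nat.eq_zero_or_pos (distNum G) with h0 | hpos
  · simp [h0, cost_zero]
  obtain ⟨f, hf⟩ := exists_isDistinguishing_distNum G
  set C := Finset.univ.filter (fun v => f v = ⟨0, hpos⟩)
  have hcost : cost G (distNum G) ≤ C.card := cost_le_card_labelClass hf _
  have hdet : detNum G ≤ Cᶜ.card :=
    detNum_le_card (by simpa [C, Set.compl_ofPred] using hf.isDeterminingSet_compl_labelClass ⟨0, hpos⟩)
  have hC : C.card ≤ Fintype.card V := Finset.card_le_univ C
  rw [Finset.card_compl] at hdet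
  omega
end

section
/- The distinguishing number of the friendship graph F_n (n ≥ 2) is D(F_n) = ⌈(1 + √(8n+1))/2⌉. -/
open SimpleGraph

/-- The friendship graph `F n`: `n` triangles sharing the common central vertex `none`. -/
def friendshipGraph (n : ℕ) : SimpleGraph (Option (Fin n × Fin 2)) :=
  SimpleGraph.fromRel (fun u v =>
    u = none ∨ ∃ (i : Fin n) (a b : Fin 2), u = some (i, a) ∧ v = some (i, b))

/-!
Automorphisms of `F n` fix the center, its only dominating vertex once `n ≥ 2`, and therefore
permute the triangles, possibly flipping their two leaves; conversely every such map is an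
automorphism. So a labeling is distinguishing exactly when the two leaves of each triangle get
distinct labels and distinct triangles get distinct unordered pairs of labels. A distinguishing
`d`-labeling thus exists iff `n ≤ d.choose 2`, and the least such `d` is
`⌈(1 + √(8n + 1)) / 2⌉`.
-/

lemma ceil_le_iff_le_choose_two {n : ℕ} (hn : 0 < n) (d : ℕ) :
    ⌈(1 + Real.sqrt (8 * n + 1)) / 2⌉₊ ≤ d ↔ n ≤ d.choose 2 := by
  rw [Nat.ceil_le, div_le_iff₀ two_pos, ← le_sub_iff_add_le', Real.sqrt_le_iff,
    ← Nat.cast_le (α := ℝ), Nat.cast_choose_two]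
  rcases Nat.eq_zero_or_pos d with rfl | hd
  · have : (0 : ℝ) < n := by exact_mod_cast hn
    norm_num
    linarith
  · have : (1 : ℝ) ≤ d := by exact_mod_cast hd
    constructor
    · intro h; nlinarith [h.2]
    · intro h; constructor <;> nlinarith

namespace friendshipGraph

variable {n : ℕ}

@[simp]
lemma adj_none_some (p : Fin n × Fin 2) : (friendshipGraph n).Adj none (some p) := by
  simp [friendshipGraph]

@[simp]
lemma adj_some_none (p : Fin n × Fin 2) : (friendshipGraph n).Adj (some p) none :=
  (adj_none_some p).symm

@[simp]
lemma adj_some_some {i j : Fin n} {a b : Fin 2} :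
    (friendshipGraph n).Adj (some (i, a)) (some (j, b)) ↔ i = j ∧ a ≠ b := by
  simp only [friendshipGraph, fromRel_adj, ne_eq, Option.some.injEq, Prod.mk.injEq,
    reduceCtorEq, false_or, exists_and_left]
  aesop

def triangleAut (g : Equiv.Perm (Fin n)) (h : Fin n → Equiv.Perm (Fin 2)) :
    friendshipGraph n ≃g friendshipGraph n where
  toEquiv := Equiv.optionCongr (Equiv.prodShear g h)
  map_rel_iff' := by
    rintro (_ | ⟨i, a⟩) (_ | ⟨j, b⟩) <;> simp +contextual

@[simp]
lemma triangleAut_none (g : Equiv.Perm (Fin n)) (h : Fin n → Equiv.Perm (Fin 2)) :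
    triangleAut g h none = none := rfl

@[simp]
lemma triangleAut_some (g : Equiv.Perm (Fin n)) (h : Fin n → Equiv.Perm (Fin 2))
    (i : Fin n) (a : Fin 2) : triangleAut g h (some (i, a)) = some (g i, h i a) := rfl

lemma adj_none_of_ne {v : Option (Fin n × Fin 2)} (hv : v ≠ none) :
    (friendshipGraph n).Adj none v := by
  obtain ⟨p, rfl⟩ := Option.ne_none_iff_exists'.mp hv
  exact adj_none_some p

lemma eq_none_of_forall_adj (hn : 2 ≤ n) {v : Option (Fin n × Fin 2)}
    (hv : ∀ w ≠ v, (friendshipGraph n).Adj v w) : v = none := by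
  obtain _ | ⟨i, a⟩ := v
  · rfl
  · have : Nontrivial (Fin n) := Fin.nontrivial_iff_two_le.mpr hn
    obtain ⟨j, hji⟩ := exists_ne i
    have := hv (some (j, 0)) (by simp [hji])
    exact absurd (adj_some_some.mp this).1 hji.symm

lemma aut_apply_none (hn : 2 ≤ n) (φ : friendshipGraph n ≃g friendshipGraph n) :
    φ none = none := by
  refine eq_none_of_forall_adj hn fun w hw => ?_
  rw [← φ.apply_symm_apply w]
  exact φ.map_adj_iff.mpr (adj_none_of_ne fun h => hw (by rw [← h, φ.apply_symm_apply]))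

lemma exists_aut_apply_triangle (hn : 2 ≤ n) (φ : friendshipGraph n ≃g friendshipGraph n)
    (i : Fin n) : ∃ j b₀ b₁, b₀ ≠ b₁ ∧ φ (some (i, 0)) = some (j, b₀) ∧
      φ (some (i, 1)) = some (j, b₁) := by
  have apply_some (a : Fin 2) : ∃ q, φ (some (i, a)) = some q :=
    Option.ne_none_iff_exists'.mp fun h => by
      simpa using φ.injective (h.trans (aut_apply_none hn φ).symm)
  obtain ⟨⟨j₀, b₀⟩, h₀⟩ := apply_some 0
  obtain ⟨⟨j₁, b₁⟩, h₁⟩ := apply_some 1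
  have hadj := φ.map_adj_iff.mpr (adj_some_some.mpr ⟨rfl, zero_ne_one⟩ :
    (friendshipGraph n).Adj (some (i, 0)) (some (i, 1)))
  rw [h₀, h₁, adj_some_some] at hadj
  obtain ⟨rfl, hb⟩ := hadj
  exact ⟨j₀, b₀, b₁, hb, h₀, h₁⟩

def leafPair {α : Type*} (f : Option (Fin n × Fin 2) → α) (i : Fin n) : Sym2 α :=
  s(f (some (i, 0)), f (some (i, 1)))

lemma leafPair_eq_of_ne {α : Type*} (f : Option (Fin n × Fin 2) → α) (j : Fin n)
    {b₀ b₁ : Fin 2} (hb : b₀ ≠ b₁) :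
    s(f (some (j, b₀)), f (some (j, b₁))) = leafPair f j := by
  fin_cases b₀ <;> fin_cases b₁ <;> simp_all [leafPair, Sym2.eq_swap]

variable {d : ℕ} {f : Option (Fin n × Fin 2) → Fin d}

-- Otherwise exchanging triangles `i` and `j`, twisted by `σ`, is a nontrivial automorphism
-- preserving `f`.
lemma eq_and_eq_one_of_isDistinguishing (hf : IsDistinguishing (friendshipGraph n) d f)
    {i j : Fin n} {σ : Equiv.Perm (Fin 2)} (hσ : ∀ a, f (some (j, σ a)) = f (some (i, a))) :
    j = i ∧ σ = 1 := by
  classical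
  set φ := triangleAut (Equiv.swap i j) (Function.update (Pi.mulSingle i σ) j σ⁻¹)
  have hφ : ∀ v, f (φ v) = f v := by
    rintro (_ | ⟨k, a⟩)
    · rfl
    by_cases hkj : k = j
    · subst hkj
      simpa [φ] using (hσ (σ⁻¹ a)).symm
    by_cases hki : k = i
    · subst hki
      simpa [φ, hkj] using hσ a
    · simp [φ, hkj, hki, Equiv.swap_apply_of_ne_of_ne]
  have hfix (a : Fin 2) := hf φ hφ (some (i, a))
  obtain rfl : j = i := by simpa [φ] using congr_arg (Option.map Prod.fst) (hfix 0)
  refine ⟨rfl, inv_eq_one.mp (Equiv.ext fun a => ?_)⟩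
  simpa [φ] using hfix a

lemma not_isDiag_leafPair_of_isDistinguishing (hf : IsDistinguishing (friendshipGraph n) d f)
    (i : Fin n) : ¬(leafPair f i).IsDiag := by
  intro hdiag
  rw [leafPair, Sym2.mk_isDiag_iff] at hdiag
  have := (eq_and_eq_one_of_isDistinguishing hf (i := i) (j := i) (σ := Equiv.swap 0 1) ?_).2
  · exact absurd this (by decide)
  · intro a
    fin_cases a <;> simp [hdiag]

lemma leafPair_injective_of_isDistinguishing (hf : IsDistinguishing (friendshipGraph n) d f) :
    Function.Injective (leafPair f) := by
  intro i j hij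
  rcases Sym2.eq_iff.mp hij with ⟨h₀, h₁⟩ | ⟨h₀, h₁⟩
  · exact (eq_and_eq_one_of_isDistinguishing hf (σ := 1)
      (by simp [Fin.forall_fin_two, h₀, h₁])).1.symm
  · exact (eq_and_eq_one_of_isDistinguishing hf (σ := Equiv.swap 0 1)
      (by simp [Fin.forall_fin_two, h₀, h₁])).1.symm

lemma isDistinguishing_iff (hn : 2 ≤ n) :
    IsDistinguishing (friendshipGraph n) d f ↔
      (∀ i, ¬(leafPair f i).IsDiag) ∧ Function.Injective (leafPair f) := by
  refine ⟨fun hf => ⟨not_isDiag_leafPair_of_isDistinguishing hf,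
    leafPair_injective_of_isDistinguishing hf⟩, fun ⟨hdiag, hinj⟩ φ hφ => ?_⟩
  rintro (_ | ⟨i, a⟩)
  · exact aut_apply_none hn φ
  obtain ⟨j, b₀, b₁, hb, h₀, h₁⟩ := exists_aut_apply_triangle hn φ i
  have l₀ := hφ (some (i, 0))
  have l₁ := hφ (some (i, 1))
  rw [h₀] at l₀
  rw [h₁] at l₁
  obtain rfl : j = i := hinj (by rw [← leafPair_eq_of_ne f j hb, l₀, l₁, leafPair])
  have hne := Sym2.mk_isDiag_iff.not.mp (hdiag j)
  fin_cases a <;> fin_cases b₀ <;> fin_cases b₁ <;> simp_all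

lemma exists_isDistinguishing_iff (hn : 2 ≤ n) (d : ℕ) :
    (∃ f : Option (Fin n × Fin 2) → Fin d, IsDistinguishing (friendshipGraph n) d f) ↔
      n ≤ d.choose 2 := by
  have hcard : Fintype.card {z : Sym2 (Fin d) // ¬z.IsDiag} = d.choose 2 := by
    rw [Sym2.card_subtype_not_diag, Fintype.card_fin]
  constructor
  · rintro ⟨f, hf⟩
    obtain ⟨hdiag, hinj⟩ := (isDistinguishing_iff hn).mp hf
    simpa [hcard] using Fintype.card_le_of_injective
      (fun i => (⟨leafPair f i, hdiag i⟩ : {z : Sym2 (Fin d) // ¬z.IsDiag}))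
      fun i j hij => hinj (congr_arg Subtype.val hij)
  · intro hle
    obtain ⟨e⟩ : Nonempty (Fin n ↪ {z : Sym2 (Fin d) // ¬z.IsDiag}) :=
      Function.Embedding.nonempty_of_card_le (by simpa [hcard] using hle)
    choose p hp using fun i => Sym2.mk_surjective (e i).1
    let f : Option (Fin n × Fin 2) → Fin d := fun v =>
      v.elim (p ⟨0, by omega⟩).1 fun (i, a) => ![(p i).1, (p i).2] a
    have hf : leafPair f = fun i => (e i).1 := by
      funext i
      simp [leafPair, f, ← hp, Function.uncurry]
    refine ⟨f, (isDistinguishing_iff hn).mpr ⟨fun i => hf ▸ (e i).2, hf ▸ ?_⟩⟩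
    exact Subtype.val_injective.comp e.injective

end friendshipGraph

theorem stmt_8 (n : ℕ) (hn : 2 ≤ n) :
    distNum (friendshipGraph n) = ⌈(1 + Real.sqrt (8 * n + 1)) / 2⌉₊ := by
  have hD : {d | ∃ f, IsDistinguishing (friendshipGraph n) d f} =
      Set.Ici ⌈(1 + Real.sqrt (8 * n + 1)) / 2⌉₊ := by
    ext d
    rw [Set.mem_ofPred_eq, friendshipGraph.exists_isDistinguishing_iff hn, Set.mem_Ici,
      ceil_le_iff_le_choose_two (by omega)]
  rw [distNum, hD, csInf_Ici]
end

section
/- For every positive integer m there exists a graph G with distinguishing number D(G) = d such that |Det(G) − ρ_d(G)| = m. -/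
/-!
Complete graphs already realise every gap. In `K_n` every permutation is an automorphism, so a
labeling is distinguishing exactly when it is injective and a set is determining exactly when it
misses at most one vertex. Hence `D(K_n) = n`, `Det(K_n) = n - 1`, and every `n`-distinguishing
labeling is a bijection, so `ρ_n(K_n) = 1`. Taking `n = m + 2` gives the gap `m`.
-/

open SimpleGraph

open Finset

section CompleteGraph

variable {V : Type*}

lemma isDistinguishing_top_iff {d : ℕ} (f : V → Fin d) :
    IsDistinguishing (⊤ : SimpleGraph V) d f ↔ Function.Injective f := by
  classical
  refine ⟨fun hf a b hab => ?_, fun hf φ hφ v => hf (hφ v)⟩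
  by_contra hne
  have hswap : ∀ v, f (Equiv.swap a b v) = f v := by
    intro v
    rcases eq_or_ne v a with rfl | hva
    · simp [hab]
    rcases eq_or_ne v b with rfl | hvb
    · simp [hab]
    · simp [Equiv.swap_apply_of_ne_of_ne hva hvb]
  have := hf (Iso.completeGraph (Equiv.swap a b)) hswap a
  simp only [Iso.completeGraph, RelIso.coe_fn_mk, Equiv.swap_apply_left] at this
  exact hne this.symm

lemma isDeterminingSet_top_iff {S : Set V} :
    IsDeterminingSet (⊤ : SimpleGraph V) S ↔ Sᶜ.Subsingleton := by
  classical
  constructor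
  · intro hS a ha b hb
    by_contra hab
    have hfix : ∀ v ∈ S, Equiv.swap a b v = v := fun v hv =>
      Equiv.swap_apply_of_ne_of_ne (by rintro rfl; exact ha hv) (by rintro rfl; exact hb hv)
    have := hS (Iso.completeGraph (Equiv.swap a b)) (Iso.completeGraph (Equiv.refl V)) hfix a
    simp only [Iso.completeGraph, RelIso.coe_fn_mk, Equiv.swap_apply_left] at this
    exact hab this.symm
  · intro hS φ ψ hagree v
    by_contra hne
    -- the vertex `w` with `ψ w = φ v` can lie neither in `S` nor outside it
    obtain ⟨w, hψw⟩ := ψ.surjective (φ v)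
    have hwv : w ≠ v := by rintro rfl; exact hne hψw.symm
    by_cases hw : w ∈ S
    · exact hwv (φ.injective (by rw [hagree w hw, hψw]))
    · exact hwv (hS hw fun hv => hne (hagree v hv))

variable [Fintype V]

lemma distNum_top : distNum (⊤ : SimpleGraph V) = Fintype.card V := by
  have hexists : ∀ d, (∃ f : V → Fin d, IsDistinguishing (⊤ : SimpleGraph V) d f) ↔
      Fintype.card V ≤ d := by
    intro d
    simp only [isDistinguishing_top_iff]
    constructor
    · rintro ⟨f, hf⟩
      simpa using Fintype.card_le_of_injective f hf
    · intro h
      exact ⟨Fin.castLE h ∘ Fintype.equivFin V,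
        (Fin.castLE_injective h).comp (Fintype.equivFin V).injective⟩
  simp only [distNum, hexists]
  exact csInf_Ici

lemma cost_top [Nonempty V] : cost (⊤ : SimpleGraph V) (Fintype.card V) = 1 := by
  classical
  suffices h : {k | ∃ (f : V → Fin (Fintype.card V)) (i : Fin (Fintype.card V)),
      IsDistinguishing ⊤ _ f ∧ k = #{v | f v = i}} = {1} by
    rw [cost, h, csInf_singleton]
  ext k
  simp only [isDistinguishing_top_iff, Set.mem_singleton_iff]
  constructor
  · rintro ⟨f, i, hf, rfl⟩
    let e := Equiv.ofBijective f ((Fintype.bijective_iff_injective_and_card f).2 ⟨hf, by simp⟩)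
    rw [card_eq_one]
    refine ⟨e.symm i, ?_⟩
    ext v
    simp only [mem_filter, mem_univ, true_and, mem_singleton, e.eq_symm_apply]
    rfl
  · rintro rfl
    obtain ⟨v⟩ := ‹Nonempty V›
    refine ⟨Fintype.equivFin V, Fintype.equivFin V v, (Fintype.equivFin V).injective, ?_⟩
    rw [eq_comm, card_eq_one]
    exact ⟨v, by ext; simp⟩

lemma detNum_top : detNum (⊤ : SimpleGraph V) = Fintype.card V - 1 := by
  classical
  have hdet : ∀ S : Finset V, IsDeterminingSet (⊤ : SimpleGraph V) ↑S ↔ #Sᶜ ≤ 1 := by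
    intro S
    rw [isDeterminingSet_top_iff, ← coe_compl, card_le_one]
    rfl
  refine le_antisymm (Nat.sInf_le ?_) (le_csInf ⟨_, univ, (hdet _).2 (by simp), rfl⟩ ?_)
  · cases isEmpty_or_nonempty V with
    | inl _ => exact ⟨∅, (hdet _).2 (by simp), by simp⟩
    | inr hV =>
      obtain ⟨v⟩ := hV
      exact ⟨{v}ᶜ, (hdet _).2 (by simp), by simp [card_compl]⟩
  · rintro k ⟨S, hS, rfl⟩
    have hcard := card_compl S
    have hcompl := (hdet S).1 hS
    omega

end CompleteGraph

theorem stmt_13_general (m : ℕ) :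
    ∃ (V : Type) (_ : Fintype V) (G : SimpleGraph V) (d : ℕ),
      distNum G = d ∧ |(detNum G : ℤ) - (cost G d : ℤ)| = m := by
  refine ⟨Fin (m + 2), inferInstance, ⊤, m + 2, by simp [distNum_top], ?_⟩
  have hcost : cost (⊤ : SimpleGraph (Fin (m + 2))) (m + 2) = 1 := by
    simpa using cost_top (V := Fin (m + 2))
  rw [detNum_top, hcost, Fintype.card_fin]
  simp

theorem stmt_13 (m : ℕ) (hm : 0 < m) :
    ∃ (V : Type) (_ : Fintype V) (G : SimpleGraph V) (d : ℕ),
      distNum G = d ∧ |(detNum G : ℤ) - (cost G d : ℤ)| = m :=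
  stmt_13_general m
end
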